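/- arXiv:1905.08821 — 2 statements merged into one kernel-verified Lean document; each statement's English description precedes it below -/
import Mathlib

section
/- Define the downsampling operator ↓ : ℓ²(ℤ) → ℓ²(ℤ) by (↓f)[n] = f[2n], and for a bounded 2π-periodic function λ define the Fourier multiplier m(λ) on ℓ²(ℤ) by multiplication with λ in the Fourier domain. Let μ_s(θ) = e^{−iθ/2} and μ_w(θ) = −i·sgn(θ)·e^{iθ/2} for |θ| < π, extended 2π-periodically. Then m(μ_w) ∘ ↓ ∘ m(μ_s) = ↓ ∘ m(μ_w) as operators on ℓ²(ℤ). -/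
open Complex Real MeasureTheory

lemma aux_exp_neg_pi : Complex.exp (-(↑π * Complex.I)) = -1 := by
  rw [Complex.exp_neg, Complex.exp_pi_mul_I]; norm_num

/-- base case, first identity -/
lemma base1 (μs μw : ℝ → ℂ)
    (hμs : ∀ θ : ℝ, |θ| < π → μs θ = Complex.exp (-(Complex.I * θ / 2)))
    (hμw : ∀ θ : ℝ, |θ| < π →
      μw θ = -Complex.I * (Real.sign θ : ℝ) * Complex.exp (Complex.I * θ / 2))
    (θ : ℝ) (h1 : |θ| < π) (h0 : θ ≠ 0) :
    μw θ * μs (θ / 2) = μw (θ / 2) := by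
  have h2 : |θ / 2| < π := by rw [abs_div]; simp [abs_of_pos pi_pos] at *; linarith [abs_nonneg θ]
  have hs : Real.sign (θ / 2) = Real.sign θ := by
    rcases h0.lt_or_gt with h | h
    · rw [Real.sign_of_neg h, Real.sign_of_neg (by linarith)]
    · rw [Real.sign_of_pos h, Real.sign_of_pos (by linarith)]
  rw [hμw θ h1, hμs _ h2, hμw _ h2, hs, mul_assoc, ← Complex.exp_add]
  congr 2
  push_cast
  ring

/-- base case, second identity -/
lemma base2 (μs μw : ℝ → ℂ)
    (hμsper : Function.Periodic μs (2 * π)) (hμwper : Function.Periodic μw (2 * π))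
    (hμs : ∀ θ : ℝ, |θ| < π → μs θ = Complex.exp (-(Complex.I * θ / 2)))
    (hμw : ∀ θ : ℝ, |θ| < π →
      μw θ = -Complex.I * (Real.sign θ : ℝ) * Complex.exp (Complex.I * θ / 2))
    (θ : ℝ) (h1 : |θ| < π) (h0 : θ ≠ 0) :
    μw θ * μs (θ / 2 + π) = μw (θ / 2 + π) := by
  rw [abs_lt] at h1
  rcases h0.lt_or_gt with h | h
  · -- θ < 0 : θ/2 + π ∈ (π/2, π)
    have h2 : |θ / 2 + π| < π := by rw [abs_lt]; constructor <;> [linarith [pi_pos]; linarith]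
    have hsθ : Real.sign θ = -1 := Real.sign_of_neg h
    have hs2 : Real.sign (θ / 2 + π) = 1 := Real.sign_of_pos (by linarith)
    rw [hμw θ (abs_lt.2 h1), hμs _ h2, hμw _ h2, hsθ, hs2]
    have key : Complex.exp (Complex.I * θ / 2) * Complex.exp (-(Complex.I * ↑(θ / 2 + π) / 2))
        = -(Complex.exp (Complex.I * ↑(θ / 2 + π) / 2)) := by
      rw [← Complex.exp_add,
        show Complex.I * ↑θ / 2 + -(Complex.I * ↑(θ / 2 + π) / 2)
            = Complex.I * ↑(θ / 2 + π) / 2 + -(↑π * Complex.I) from by push_cast; ring,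
        Complex.exp_add, aux_exp_neg_pi]
      ring
    push_cast at key ⊢
    linear_combination Complex.I * key
  · -- θ > 0 : shift θ/2 + π down by 2π
    have e1 : θ / 2 + π = (θ / 2 - π) + 2 * π := by ring
    rw [e1, hμsper (θ / 2 - π), hμwper (θ / 2 - π)]
    have h2 : |θ / 2 - π| < π := by rw [abs_lt]; constructor <;> [linarith; linarith [pi_pos]]
    have hsθ : Real.sign θ = 1 := Real.sign_of_pos h
    have hs2 : Real.sign (θ / 2 - π) = -1 := Real.sign_of_neg (by linarith)
    rw [hμw θ (abs_lt.2 h1), hμs _ h2, hμw _ h2, hsθ, hs2]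
    have key : Complex.exp (Complex.I * θ / 2) * Complex.exp (-(Complex.I * ↑(θ / 2 - π) / 2))
        = -(Complex.exp (Complex.I * ↑(θ / 2 - π) / 2)) := by
      rw [← Complex.exp_add,
        show Complex.I * ↑θ / 2 + -(Complex.I * ↑(θ / 2 - π) / 2)
            = Complex.I * ↑(θ / 2 - π) / 2 + ↑π * Complex.I from by push_cast; ring,
        Complex.exp_add, Complex.exp_pi_mul_I]
      ring
    push_cast at key ⊢
    linear_combination (-Complex.I) * key

lemma ids (μs μw : ℝ → ℂ)
    (hμsper : Function.Periodic μs (2 * π)) (hμwper : Function.Periodic μw (2 * π))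
    (hμs : ∀ θ : ℝ, |θ| < π → μs θ = Complex.exp (-(Complex.I * θ / 2)))
    (hμw : ∀ θ : ℝ, |θ| < π →
      μw θ = -Complex.I * (Real.sign θ : ℝ) * Complex.exp (Complex.I * θ / 2))
    (θ : ℝ) (hθ : ∀ k : ℤ, θ ≠ k * π) :
    μw θ * μs (θ / 2) = μw (θ / 2) ∧ μw θ * μs (θ / 2 + π) = μw (θ / 2 + π) := by
  set n : ℤ := round (θ / (2 * π)) with hn
  set θ₀ : ℝ := θ - n * (2 * π) with hθ₀
  have h2π : (0:ℝ) < 2 * π := by positivity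
  have hw : μw θ₀ = μw θ := hμwper.sub_int_mul_eq n
  have hr : |θ / (2 * π) - n| ≤ 1 / 2 := abs_sub_round _
  have hb : |θ₀| ≤ π := by
    have e : θ₀ = (θ / (2 * π) - n) * (2 * π) := by field_simp; rw [hθ₀]; ring
    rw [e, abs_mul, abs_of_pos h2π]
    calc |θ / (2 * π) - ↑n| * (2 * π) ≤ (1/2) * (2 * π) :=
          mul_le_mul_of_nonneg_right hr h2π.le
      _ = π := by ring
  have h0 : θ₀ ≠ 0 := by
    intro h
    exact hθ (2 * n) (by push_cast; have := hθ₀ ▸ h; linarith)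
  have h1 : |θ₀| < π := by
    rcases lt_or_eq_of_le hb with h | h
    · exact h
    · exfalso
      rcases (abs_eq pi_pos.le).1 h with h | h
      · exact hθ (2 * n + 1) (by push_cast; have := hθ₀ ▸ h; linarith)
      · exact hθ (2 * n - 1) (by push_cast; have := hθ₀ ▸ h; linarith)
  have B1 := base1 μs μw hμs hμw θ₀ h1 h0
  have B2 := base2 μs μw hμsper hμwper hμs hμw θ₀ h1 h0
  rcases Int.even_or_odd n with ⟨m, hm⟩ | ⟨m, hm⟩
  · have es : μs (θ₀ / 2) = μs (θ / 2) := by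
      rw [show θ₀ / 2 = θ / 2 - (m : ℝ) * (2 * π) from by rw [hθ₀, hm]; push_cast; ring]
      exact hμsper.sub_int_mul_eq m
    have es' : μs (θ₀ / 2 + π) = μs (θ / 2 + π) := by
      rw [show θ₀ / 2 + π = θ / 2 + π - (m : ℝ) * (2 * π) from by rw [hθ₀, hm]; push_cast; ring]
      exact hμsper.sub_int_mul_eq m
    have ew : μw (θ₀ / 2) = μw (θ / 2) := by
      rw [show θ₀ / 2 = θ / 2 - (m : ℝ) * (2 * π) from by rw [hθ₀, hm]; push_cast; ring]
      exact hμwper.sub_int_mul_eq m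
    have ew' : μw (θ₀ / 2 + π) = μw (θ / 2 + π) := by
      rw [show θ₀ / 2 + π = θ / 2 + π - (m : ℝ) * (2 * π) from by rw [hθ₀, hm]; push_cast; ring]
      exact hμwper.sub_int_mul_eq m
    exact ⟨by rw [← hw, ← es, ← ew]; exact B1, by rw [← hw, ← es', ← ew']; exact B2⟩
  · have es : μs (θ₀ / 2 + π) = μs (θ / 2) := by
      rw [show θ₀ / 2 + π = θ / 2 - (m : ℝ) * (2 * π) from by rw [hθ₀, hm]; push_cast; ring]
      exact hμsper.sub_int_mul_eq m
    have es' : μs (θ₀ / 2) = μs (θ / 2 + π) := by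
      rw [show θ₀ / 2 = θ / 2 + π - ((m : ℝ) + 1) * (2 * π) from by rw [hθ₀, hm]; push_cast; ring]
      exact_mod_cast hμsper.sub_int_mul_eq (m + 1)
    have ew : μw (θ₀ / 2 + π) = μw (θ / 2) := by
      rw [show θ₀ / 2 + π = θ / 2 - (m : ℝ) * (2 * π) from by rw [hθ₀, hm]; push_cast; ring]
      exact hμwper.sub_int_mul_eq m
    have ew' : μw (θ₀ / 2) = μw (θ / 2 + π) := by
      rw [show θ₀ / 2 = θ / 2 + π - ((m : ℝ) + 1) * (2 * π) from by rw [hθ₀, hm]; push_cast; ring]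
      exact_mod_cast hμwper.sub_int_mul_eq (m + 1)
    exact ⟨by rw [← hw, ← es, ← ew]; exact B2, by rw [← hw, ← es', ← ew']; exact B1⟩

/-- The commutation relation `m(μ_w) ∘ ↓ ∘ m(μ_s) = ↓ ∘ m(μ_w)` on `ℓ²(ℤ)`, expressed
on the Fourier side: for the 2π-periodic phase functions `μ_s(θ) = e^{−iθ/2}` and
`μ_w(θ) = −i sgn(θ) e^{iθ/2}` (`|θ| < π`), and any Fourier transform `F` of a sequence,
using `(↓f)^(θ) = ½(f̂(θ/2) + f̂(θ/2+π))`, the two sides agree for almost every `θ`. -/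
theorem downsampling_multiplier_commutation
    (μs μw : ℝ → ℂ)
    (hμsper : Function.Periodic μs (2 * π)) (hμwper : Function.Periodic μw (2 * π))
    (hμs : ∀ θ : ℝ, |θ| < π → μs θ = Complex.exp (-(Complex.I * θ / 2)))
    (hμw : ∀ θ : ℝ, |θ| < π →
      μw θ = -Complex.I * (Real.sign θ : ℝ) * Complex.exp (Complex.I * θ / 2))
    (F : ℝ → ℂ) :
    ∀ᵐ θ : ℝ ∂(volume : Measure ℝ),
      μw θ * ((1 / 2 : ℂ) * (μs (θ / 2) * F (θ / 2) + μs (θ / 2 + π) * F (θ / 2 + π)))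
        = (1 / 2 : ℂ) * (μw (θ / 2) * F (θ / 2) + μw (θ / 2 + π) * F (θ / 2 + π)) := by
  have hS : (volume : Measure ℝ) (Set.range (fun k : ℤ => (k : ℝ) * π)) = 0 :=
    (Set.countable_range _).measure_zero _
  filter_upwards [measure_eq_zero_iff_ae_notMem.1 hS] with θ hθ
  have hθ' : ∀ k : ℤ, θ ≠ (k : ℝ) * π := by
    intro k hk
    exact hθ ⟨k, hk.symm⟩
  obtain ⟨h1, h2⟩ := ids μs μw hμsper hμwper hμs hμw θ hθ'
  linear_combination (F (θ / 2) / 2) * h1 + (F (θ / 2 + π) / 2) * h2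
end

section
/- Let W_g, W_h : ℓ²(ℤ) → ℓ²(ℤ) ⊗ ℂ² be the single-layer wavelet transforms W_g = (↓ m(conj ĝ_w)) ⊕ (↓ m(conj ĝ_s)) and W_h = (↓ m(conj ĥ_w)) ⊕ (↓ m(conj ĥ_s)) built from an ε-approximate Hilbert pair, i.e. ‖ĥ_s − μ_s ĝ_s‖_∞ ≤ ε (which implies ‖ĥ_w − μ_w ĝ_w‖_∞ ≤ ε). Define W̃_h = (↓ m(μ_w conj ĥ_w)) ⊕ (↓ m(μ_s conj ĥ_s)). Then W_h ∘ m(μ_w) = (1 ⊕ m(μ_w)) ∘ W̃_h and ‖W_g − W̃_h‖ ≤ ε. -/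
/-!
Off the null set `πℤ` the phases have closed forms `μ_s θ = sgn(cos(θ/2)) e^{-iθ/2}` and
`μ_w θ = -i sgn(sin(θ/2)) e^{iθ/2}`, from which `μ_w θ = conj μ_s(θ+π)` and
`μ_w θ μ_s(θ/2) = μ_w(θ/2)`. The first, with the conjugate mirror relation, turns the wavelet defect
`ĥ_w − μ_w ĝ_w` at `θ` into the scaling defect at `θ + π`; the second is the operator identity.
For the norm bound, the 2×2 polyphase matrix of `W_g − W̃_h` at `θ/2, θ/2 + π` has orthogonal
columns whose squared length is the sum of the two squared scaling defects, at most `2ε²`; halving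
the angle and integrating over a period gives `‖(W_g − W̃_h) f‖² ≤ ε² ‖f‖²`.
-/

open Complex Real MeasureTheory

theorem Real.sign_mul (x y : ℝ) : Real.sign (x * y) = Real.sign x * Real.sign y := by
  rcases lt_trichotomy x 0 with hx | rfl | hx <;> rcases lt_trichotomy y 0 with hy | rfl | hy <;>
    simp [Real.sign_of_pos, Real.sign_of_neg, mul_pos_of_neg_of_neg, mul_neg_of_pos_of_neg,
      mul_neg_of_neg_of_pos, *]

theorem Real.sign_mul_self_of_ne_zero {x : ℝ} (hx : x ≠ 0) : Real.sign x * Real.sign x = 1 := by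
  rcases Real.sign_apply_eq_of_ne_zero x hx with h | h <;> simp [h]

theorem Real.cos_half_ne_zero_of_sin_ne_zero {θ : ℝ} (h : Real.sin θ ≠ 0) :
    Real.cos (θ / 2) ≠ 0 := by
  rw [← mul_div_cancel₀ θ two_ne_zero, Real.sin_two_mul] at h
  exact right_ne_zero_of_mul h

theorem Real.sin_half_ne_zero_of_sin_ne_zero {θ : ℝ} (h : Real.sin θ ≠ 0) :
    Real.sin (θ / 2) ≠ 0 := by
  rw [← mul_div_cancel₀ θ two_ne_zero, Real.sin_two_mul] at h
  exact right_ne_zero_of_mul (left_ne_zero_of_mul h)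

theorem conj_exp_neg_I_mul (x : ℝ) : starRingEnd ℂ (exp (-(I * x))) = exp (I * x) := by
  rw [← exp_conj]; simp

-- `cos (θ / 2) ≠ 0` says `θ ∉ π + 2πℤ`, the only points the reduction to `(-π, π)` misses.
theorem eq_of_periodic_of_eqOn_Ioo {β : Type*} {f g : ℝ → β} (hf : Function.Periodic f (2 * π))
    (hg : Function.Periodic g (2 * π)) (hfg : ∀ θ : ℝ, |θ| < π → f θ = g θ) {θ : ℝ}
    (hθ : Real.cos (θ / 2) ≠ 0) : f θ = g θ := by
  set k := toIocDiv two_pi_pos (-π) θ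
  obtain ⟨hlo, hhi⟩ := toIocMod_mem_Ioc two_pi_pos (-π) θ
  have hsub : θ - k • (2 * π) = toIocMod two_pi_pos (-π) θ := self_sub_toIocDiv_zsmul _ _ _
  rw [← hf.sub_zsmul_eq k, ← hg.sub_zsmul_eq k, hsub]
  refine hfg _ (abs_lt.2 ⟨hlo, lt_of_le_of_ne (by linarith) fun h => hθ ?_⟩)
  refine Real.cos_eq_zero_iff.2 ⟨k, ?_⟩
  rw [zsmul_eq_mul] at hsub
  linarith

theorem periodic_sign_cos_half_mul_exp :
    Function.Periodic (fun θ : ℝ => (Real.sign (Real.cos (θ / 2)) : ℂ) * exp (-(I * θ / 2)))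
      (2 * π) := by
  intro θ
  have hcos : Real.cos ((θ + 2 * π) / 2) = -Real.cos (θ / 2) := by
    rw [add_div, mul_div_cancel_left₀ π two_ne_zero, Real.cos_add_pi]
  have hexp : exp (-(I * ↑(θ + 2 * π) / 2)) = -exp (-(I * θ / 2)) := by
    rw [show -(I * ↑(θ + 2 * π) / 2) = -(I * θ / 2) - π * I by push_cast; ring, Complex.exp_sub,
      exp_pi_mul_I, div_neg, div_one]
  simp only [hcos, Real.sign_neg, hexp]
  push_cast; ring

theorem periodic_sign_sin_half_mul_exp :
    Function.Periodic (fun θ : ℝ => -I * (Real.sign (Real.sin (θ / 2)) : ℂ) * exp (I * θ / 2))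
      (2 * π) := by
  intro θ
  have hsin : Real.sin ((θ + 2 * π) / 2) = -Real.sin (θ / 2) := by
    rw [add_div, mul_div_cancel_left₀ π two_ne_zero, Real.sin_add_pi]
  have hexp : exp (I * ↑(θ + 2 * π) / 2) = -exp (I * θ / 2) := by
    rw [show I * ↑(θ + 2 * π) / 2 = I * θ / 2 + π * I by push_cast; ring, Complex.exp_add,
      exp_pi_mul_I]
    ring
  simp only [hsin, Real.sign_neg, hexp]
  push_cast; ring

structure IsHilbertPhasePair (μs μw : ℝ → ℂ) : Prop where
  periodic_s : Function.Periodic μs (2 * π)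
  periodic_w : Function.Periodic μw (2 * π)
  eq_s : ∀ θ : ℝ, |θ| < π → μs θ = exp (-(I * θ / 2))
  eq_w : ∀ θ : ℝ, |θ| < π → μw θ = -I * (Real.sign θ : ℝ) * exp (I * θ / 2)

namespace IsHilbertPhasePair

variable {μs μw : ℝ → ℂ}

-- The `2π`-periodic extensions of `e^{-iθ/2}` and `-i sgn θ e^{iθ/2}`: the branch jump of the
-- half-angle exponential at odd multiples of `π` is absorbed by a sign of `cos (θ / 2)`.
theorem s_eq_sign_mul_exp (h : IsHilbertPhasePair μs μw) {θ : ℝ} (hθ : Real.cos (θ / 2) ≠ 0) :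
    μs θ = Real.sign (Real.cos (θ / 2)) * exp (-(I * θ / 2)) := by
  refine eq_of_periodic_of_eqOn_Ioo h.periodic_s periodic_sign_cos_half_mul_exp (fun t ht => ?_) hθ
  have hpos : 0 < Real.cos (t / 2) :=
    Real.cos_pos_of_mem_Ioo ⟨by linarith [(abs_lt.1 ht).1], by linarith [(abs_lt.1 ht).2]⟩
  simp [h.eq_s t ht, Real.sign_of_pos hpos]

theorem w_eq_sign_mul_exp (h : IsHilbertPhasePair μs μw) {θ : ℝ} (hθ : Real.cos (θ / 2) ≠ 0) :
    μw θ = -I * Real.sign (Real.sin (θ / 2)) * exp (I * θ / 2) := by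
  refine eq_of_periodic_of_eqOn_Ioo h.periodic_w periodic_sign_sin_half_mul_exp (fun t ht => ?_) hθ
  obtain ⟨hlo, hhi⟩ := abs_lt.1 ht
  have hsign : Real.sign (Real.sin (t / 2)) = Real.sign t := by
    rcases lt_trichotomy t 0 with h | rfl | h
    · rw [Real.sign_of_neg h, Real.sign_of_neg (Real.sin_neg_of_neg_of_neg_pi_lt (by linarith)
        (by linarith))]
    · simp
    · rw [Real.sign_of_pos h, Real.sign_of_pos (Real.sin_pos_of_pos_of_lt_pi (by linarith)
        (by linarith))]
  rw [h.eq_w t ht, hsign]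

theorem norm_s (h : IsHilbertPhasePair μs μw) {θ : ℝ} (hθ : Real.cos (θ / 2) ≠ 0) :
    ‖μs θ‖ = 1 := by
  rw [h.s_eq_sign_mul_exp hθ, norm_mul, Complex.norm_exp]
  rcases Real.sign_apply_eq_of_ne_zero _ hθ with hs | hs <;> simp [hs]

theorem w_eq_conj_s_add_pi (h : IsHilbertPhasePair μs μw) {θ : ℝ} (hθ : Real.sin θ ≠ 0) :
    μw θ = starRingEnd ℂ (μs (θ + π)) := by
  have hcos : Real.cos ((θ + π) / 2) = -Real.sin (θ / 2) := by
    rw [add_div, Real.cos_add_pi_div_two]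
  have hexp : exp (I * ↑(θ + π) / 2) = I * exp (I * θ / 2) := by
    rw [show I * ↑(θ + π) / 2 = (π / 2 : ℂ) * I + I * θ / 2 by push_cast; ring, Complex.exp_add,
      exp_pi_div_two_mul_I]
  have hcos_ne : Real.cos ((θ + π) / 2) ≠ 0 := by
    rw [hcos]; exact neg_ne_zero.2 (Real.sin_half_ne_zero_of_sin_ne_zero hθ)
  have hconj : starRingEnd ℂ (-(I * ↑(θ + π) / 2)) = I * ↑(θ + π) / 2 := by
    simp only [map_neg, map_div₀, map_mul, conj_I, conj_ofReal, map_ofNat]; ring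
  rw [h.w_eq_sign_mul_exp (Real.cos_half_ne_zero_of_sin_ne_zero hθ), h.s_eq_sign_mul_exp hcos_ne,
    map_mul, Complex.conj_ofReal, ← exp_conj, hcos, Real.sign_neg, hconj, hexp]
  push_cast
  ring

theorem w_mul_s_half (h : IsHilbertPhasePair μs μw) {θ : ℝ} (hθ : Real.sin θ ≠ 0) :
    μw θ * μs (θ / 2) = μw (θ / 2) := by
  have hcos4 := Real.cos_half_ne_zero_of_sin_ne_zero (Real.sin_half_ne_zero_of_sin_ne_zero hθ)
  have hsign : Real.sign (Real.sin (θ / 2))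
      = Real.sign (Real.sin (θ / 2 / 2)) * Real.sign (Real.cos (θ / 2 / 2)) := by
    rw [← Real.sign_mul, ← mul_div_cancel₀ (θ / 2) two_ne_zero, Real.sin_two_mul, mul_assoc,
      Real.sign_mul, Real.sign_of_pos two_pos, one_mul, mul_div_cancel₀ _ two_ne_zero]
  have hexp : exp (I * θ / 2) = exp (I * ↑(θ / 2) / 2) * exp (I * ↑(θ / 2) / 2) := by
    rw [← Complex.exp_add]; push_cast; ring_nf
  have hinv : exp (-(I * ↑(θ / 2) / 2)) * exp (I * ↑(θ / 2) / 2) = 1 := by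
    rw [← Complex.exp_add, neg_add_cancel, Complex.exp_zero]
  have hsq : (Real.sign (Real.cos (θ / 2 / 2)) : ℂ) * Real.sign (Real.cos (θ / 2 / 2)) = 1 := by
    exact_mod_cast Real.sign_mul_self_of_ne_zero hcos4
  rw [h.w_eq_sign_mul_exp (Real.cos_half_ne_zero_of_sin_ne_zero hθ), h.s_eq_sign_mul_exp hcos4,
    h.w_eq_sign_mul_exp hcos4, hsign, hexp, Complex.ofReal_mul]
  set E := exp (I * ↑(θ / 2) / 2)
  set c := (Real.sign (Real.cos (θ / 2 / 2)) : ℂ)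
  set s := (Real.sign (Real.sin (θ / 2 / 2)) : ℂ)
  linear_combination (-I * s * E * c * c) * hinv + (-I * s * E) * hsq

theorem w_mul_s_half_add_pi (h : IsHilbertPhasePair μs μw) {θ : ℝ} (hθ : Real.sin θ ≠ 0) :
    μw θ * μs (θ / 2 + π) = μw (θ / 2 + π) := by
  have hθ' : Real.sin (θ + 2 * π) ≠ 0 := by rwa [Real.sin_add_two_pi]
  have := h.w_mul_s_half hθ'
  rwa [h.periodic_w, add_div, mul_div_cancel_left₀ π two_ne_zero] at this

end IsHilbertPhasePair

theorem norm_sq_add_norm_sq_of_orthogonal {p q r s : ℂ}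
    (h : p * starRingEnd ℂ q + r * starRingEnd ℂ s = 0) (x y : ℂ) :
    ‖p * x + q * y‖ ^ 2 + ‖r * x + s * y‖ ^ 2
      = (‖p‖ ^ 2 + ‖r‖ ^ 2) * ‖x‖ ^ 2 + (‖q‖ ^ 2 + ‖s‖ ^ 2) * ‖y‖ ^ 2 := by
  have hcross : (p * x * starRingEnd ℂ (q * y)).re + (r * x * starRingEnd ℂ (s * y)).re = 0 := by
    rw [← add_re, map_mul, map_mul,
      show p * x * (starRingEnd ℂ q * starRingEnd ℂ y) + r * x * (starRingEnd ℂ s * starRingEnd ℂ y)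
        = (p * starRingEnd ℂ q + r * starRingEnd ℂ s) * (x * starRingEnd ℂ y) by ring,
      h, zero_mul, zero_re]
  simp only [Complex.sq_norm, normSq_add, normSq_mul] at hcross ⊢
  linarith

theorem mul_conj_eq_one_of_norm_eq_one {z : ℂ} (hz : ‖z‖ = 1) : z * starRingEnd ℂ z = 1 := by
  rw [mul_conj, normSq_eq_norm_sq, hz]; simp

/-- The polyphase matrix of `W_g - W̃_h` is `[[-E β̄ v, E ᾱ u], [-α ū, -β v̄]]` in terms of the
defects `u = h₀ - α g₀`, `v = h₁ - β g₁`: its columns are orthogonal, each of squared length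
`‖u‖² + ‖v‖²`. -/
theorem norm_sq_add_norm_sq_polyphase_error {E α β g₀ g₁ h₀ h₁ : ℂ} (hE : ‖E‖ = 1)
    (hα : ‖α‖ = 1) (hβ : ‖β‖ = 1) (x y : ℂ) :
    ‖(E * g₁ - starRingEnd ℂ β * (E * h₁)) * x + (-E * g₀ - starRingEnd ℂ α * (-E * h₀)) * y‖ ^ 2
      + ‖(starRingEnd ℂ g₀ - α * starRingEnd ℂ h₀) * x
          + (starRingEnd ℂ g₁ - β * starRingEnd ℂ h₁) * y‖ ^ 2
      = (‖h₀ - α * g₀‖ ^ 2 + ‖h₁ - β * g₁‖ ^ 2) * (‖x‖ ^ 2 + ‖y‖ ^ 2) := by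
  have hE' := mul_conj_eq_one_of_norm_eq_one hE
  have hα' := mul_conj_eq_one_of_norm_eq_one hα
  have hβ' := mul_conj_eq_one_of_norm_eq_one hβ
  have hp : E * g₁ - starRingEnd ℂ β * (E * h₁) = -E * starRingEnd ℂ β * (h₁ - β * g₁) := by
    linear_combination (-E * g₁) * hβ'
  have hq : -E * g₀ - starRingEnd ℂ α * (-E * h₀) = E * starRingEnd ℂ α * (h₀ - α * g₀) := by
    linear_combination (E * g₀) * hα'
  have hr : starRingEnd ℂ g₀ - α * starRingEnd ℂ h₀ = -α * starRingEnd ℂ (h₀ - α * g₀) := by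
    rw [map_sub, map_mul]; linear_combination (-starRingEnd ℂ g₀) * hα'
  have hs : starRingEnd ℂ g₁ - β * starRingEnd ℂ h₁ = -β * starRingEnd ℂ (h₁ - β * g₁) := by
    rw [map_sub, map_mul]; linear_combination (-starRingEnd ℂ g₁) * hβ'
  have horth : (-E * starRingEnd ℂ β * (h₁ - β * g₁))
        * starRingEnd ℂ (E * starRingEnd ℂ α * (h₀ - α * g₀))
      + (-α * starRingEnd ℂ (h₀ - α * g₀))
        * starRingEnd ℂ (-β * starRingEnd ℂ (h₁ - β * g₁)) = 0 := by
    simp only [map_mul, map_neg, conj_conj]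
    linear_combination (-α * starRingEnd ℂ β * (h₁ - β * g₁) * starRingEnd ℂ (h₀ - α * g₀)) * hE'
  rw [hp, hq, hr, hs, norm_sq_add_norm_sq_of_orthogonal horth]
  simp only [norm_mul, norm_neg, Complex.norm_conj, hE, hα, hβ]
  ring

section HalfAngle

variable {E : Type*} [NormedAddCommGroup E] {f : ℝ → E} {a : ℝ}

theorem IntervalIntegrable.halves (hf : IntervalIntegrable f volume 0 (2 * a)) :
    IntervalIntegrable f volume 0 a ∧ IntervalIntegrable f volume a (2 * a) := by
  have ha : a ∈ Set.uIcc 0 (2 * a) := by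
    rcases le_total 0 a with h | h
    · exact Set.mem_uIcc.2 (Or.inl ⟨h, by linarith⟩)
    · exact Set.mem_uIcc.2 (Or.inr ⟨by linarith, h⟩)
  exact ⟨hf.mono_set (Set.uIcc_subset_uIcc Set.left_mem_uIcc ha),
    hf.mono_set (Set.uIcc_subset_uIcc ha Set.right_mem_uIcc)⟩

theorem IntervalIntegrable.comp_half_and_comp_half_add
    (hf : IntervalIntegrable f volume 0 (2 * a)) :
    IntervalIntegrable (fun θ => f (θ / 2)) volume 0 (2 * a) ∧
      IntervalIntegrable (fun θ => f (θ / 2 + a)) volume 0 (2 * a) := by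
  obtain ⟨h₁, h₂⟩ := hf.halves
  have h₁' := h₁.comp_mul_right (c := 2⁻¹)
  have h₂' := (h₂.comp_add_right a).comp_mul_right (c := 2⁻¹)
  simp only [← div_eq_mul_inv, div_inv_eq_mul, zero_mul, sub_self, two_mul, add_sub_cancel_right]
    at h₁' h₂'
  rw [mul_comm] at h₁' h₂'
  exact ⟨h₁', h₂'⟩

theorem intervalIntegral.integral_comp_half_add_comp_half_add [NormedSpace ℝ E]
    (hf : IntervalIntegrable f volume 0 (2 * a)) :
    ∫ θ in (0 : ℝ)..(2 * a), (f (θ / 2) + f (θ / 2 + a))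
      = (2 : ℝ) • ∫ θ in (0 : ℝ)..(2 * a), f θ := by
  obtain ⟨h₁, h₂⟩ := hf.halves
  obtain ⟨h₁', h₂'⟩ := hf.comp_half_and_comp_half_add
  rw [intervalIntegral.integral_add h₁' h₂', intervalIntegral.integral_comp_div _ two_ne_zero,
    intervalIntegral.integral_comp_div_add _ two_ne_zero,
    ← intervalIntegral.integral_add_adjacent_intervals h₁ h₂, zero_div,
    mul_div_cancel_left₀ a two_ne_zero, zero_add, ← two_mul, smul_add]

end HalfAngle

theorem intervalIntegral.integral_le_of_ae_le_comp_half_add {G f : ℝ → ℝ} {a c : ℝ} (ha : 0 ≤ a)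
    (hG : ∀ θ, 0 ≤ G θ) (hf : IntervalIntegrable f volume 0 (2 * a))
    (hle : ∀ᵐ θ, G θ ≤ c * (f (θ / 2) + f (θ / 2 + a))) :
    ∫ θ in (0 : ℝ)..(2 * a), G θ ≤ 2 * c * ∫ θ in (0 : ℝ)..(2 * a), f θ := by
  have h2a : 0 ≤ 2 * a := by linarith
  obtain ⟨h₁, h₂⟩ := hf.comp_half_and_comp_half_add
  calc ∫ θ in (0 : ℝ)..(2 * a), G θ
      ≤ ∫ θ in (0 : ℝ)..(2 * a), c * (f (θ / 2) + f (θ / 2 + a)) := by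
        rw [intervalIntegral.integral_of_le h2a, intervalIntegral.integral_of_le h2a]
        exact integral_mono_of_nonneg (ae_of_all _ hG)
          ((intervalIntegrable_iff_integrableOn_Ioc_of_le h2a).1 ((h₁.add h₂).const_mul c))
          (ae_restrict_of_ae hle)
    _ = 2 * c * ∫ θ in (0 : ℝ)..(2 * a), f θ := by
        rw [intervalIntegral.integral_const_mul, integral_comp_half_add_comp_half_add hf,
          smul_eq_mul]
        ring

theorem ae_sin_ne_zero : ∀ᵐ θ : ℝ, Real.sin θ ≠ 0 := by
  refine measure_mono_null (fun θ hθ => ?_)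
    ((Set.countable_range fun n : ℤ => (n : ℝ) * π).measure_zero volume)
  exact Real.sin_eq_zero_iff.1 (not_not.1 hθ)

theorem conj_of_mirror {g w : ℝ → ℂ}
    (hw : ∀ θ : ℝ, w θ = exp (-(I * θ)) * starRingEnd ℂ (g (θ + π))) (θ : ℝ) :
    starRingEnd ℂ (w θ) = exp (I * θ) * g (θ + π) := by
  rw [hw, map_mul, conj_exp_neg_I_mul, conj_conj]

theorem conj_of_mirror_add_pi {g w : ℝ → ℂ} (hg : Function.Periodic g (2 * π))
    (hw : ∀ θ : ℝ, w θ = exp (-(I * θ)) * starRingEnd ℂ (g (θ + π))) (θ : ℝ) :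
    starRingEnd ℂ (w (θ + π)) = -exp (I * θ) * g θ := by
  rw [conj_of_mirror hw, add_assoc, ← two_mul, hg,
    show I * ↑(θ + π) = I * θ + π * I by push_cast; ring, Complex.exp_add, exp_pi_mul_I]
  ring

section HilbertPair

variable {μs μw gs gw hs hw : ℝ → ℂ}

theorem IsHilbertPhasePair.norm_wavelet_defect (h : IsHilbertPhasePair μs μw)
    (hmirror_g : ∀ θ : ℝ, gw θ = exp (-(I * θ)) * starRingEnd ℂ (gs (θ + π)))
    (hmirror_h : ∀ θ : ℝ, hw θ = exp (-(I * θ)) * starRingEnd ℂ (hs (θ + π)))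
    {θ : ℝ} (hθ : Real.sin θ ≠ 0) :
    ‖hw θ - μw θ * gw θ‖ = ‖hs (θ + π) - μs (θ + π) * gs (θ + π)‖ := by
  have hexp : ‖exp (-(I * θ))‖ = 1 := by
    rw [show -(I * (θ : ℂ)) = I * ↑(-θ) by push_cast; ring]
    exact norm_exp_I_mul_ofReal _
  rw [hmirror_h, hmirror_g, h.w_eq_conj_s_add_pi hθ,
    show exp (-(I * θ)) * starRingEnd ℂ (hs (θ + π))
        - starRingEnd ℂ (μs (θ + π)) * (exp (-(I * θ)) * starRingEnd ℂ (gs (θ + π)))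
      = exp (-(I * θ)) * starRingEnd ℂ (hs (θ + π) - μs (θ + π) * gs (θ + π)) by
      simp only [map_sub, map_mul]; ring,
    norm_mul, hexp, one_mul, Complex.norm_conj]

theorem IsHilbertPhasePair.norm_sq_polyphase_error (h : IsHilbertPhasePair μs μw)
    (hgs : Function.Periodic gs (2 * π)) (hhs : Function.Periodic hs (2 * π))
    (hmirror_g : ∀ θ : ℝ, gw θ = exp (-(I * θ)) * starRingEnd ℂ (gs (θ + π)))
    (hmirror_h : ∀ θ : ℝ, hw θ = exp (-(I * θ)) * starRingEnd ℂ (hs (θ + π)))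
    {φ : ℝ} (hφ : Real.sin φ ≠ 0) (x y : ℂ) :
    ‖(1 / 2 : ℂ) * ((starRingEnd ℂ (gw φ) - μw φ * starRingEnd ℂ (hw φ)) * x
        + (starRingEnd ℂ (gw (φ + π)) - μw (φ + π) * starRingEnd ℂ (hw (φ + π))) * y)‖ ^ 2
      + ‖(1 / 2 : ℂ) * ((starRingEnd ℂ (gs φ) - μs φ * starRingEnd ℂ (hs φ)) * x
        + (starRingEnd ℂ (gs (φ + π)) - μs (φ + π) * starRingEnd ℂ (hs (φ + π))) * y)‖ ^ 2
      = (‖hs φ - μs φ * gs φ‖ ^ 2 + ‖hs (φ + π) - μs (φ + π) * gs (φ + π)‖ ^ 2)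
          * (‖x‖ ^ 2 + ‖y‖ ^ 2) / 4 := by
  have hφπ : Real.sin (φ + π) ≠ 0 := by rw [Real.sin_add_pi]; exact neg_ne_zero.2 hφ
  have hμwπ : μw (φ + π) = starRingEnd ℂ (μs φ) := by
    rw [h.w_eq_conj_s_add_pi hφπ, add_assoc, ← two_mul, h.periodic_s]
  rw [conj_of_mirror hmirror_g, conj_of_mirror hmirror_h, conj_of_mirror_add_pi hgs hmirror_g,
    conj_of_mirror_add_pi hhs hmirror_h, h.w_eq_conj_s_add_pi hφ, hμwπ, norm_mul, norm_mul,
    mul_pow, mul_pow, ← mul_add,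
    norm_sq_add_norm_sq_polyphase_error (norm_exp_I_mul_ofReal φ)
      (h.norm_s (Real.cos_half_ne_zero_of_sin_ne_zero hφ))
      (h.norm_s (Real.cos_half_ne_zero_of_sin_ne_zero hφπ))]
  norm_num
  ring

end HilbertPair

theorem approximate_hilbert_pair_one_layer_general
    (ε : ℝ)
    (gs gw hs hw μs μw : ℝ → ℂ)
    (hgsper : Function.Periodic gs (2 * π)) (hhsper : Function.Periodic hs (2 * π))
    (hμsper : Function.Periodic μs (2 * π)) (hμwper : Function.Periodic μw (2 * π))
    (hμs : ∀ θ : ℝ, |θ| < π → μs θ = Complex.exp (-(Complex.I * θ / 2)))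
    (hμw : ∀ θ : ℝ, |θ| < π →
      μw θ = -Complex.I * (Real.sign θ : ℝ) * Complex.exp (Complex.I * θ / 2))
    (hmirror_g : ∀ θ : ℝ, gw θ = Complex.exp (-(Complex.I * θ)) * (starRingEnd ℂ) (gs (θ + π)))
    (hmirror_h : ∀ θ : ℝ, hw θ = Complex.exp (-(Complex.I * θ)) * (starRingEnd ℂ) (hs (θ + π)))
    (hHilb : ∀ θ : ℝ, ‖hs θ - μs θ * gs θ‖ ≤ ε) :
    -- (a) implied wavelet-filter bound
    (∀ᵐ θ : ℝ ∂(volume : Measure ℝ), ‖hw θ - μw θ * gw θ‖ ≤ ε) ∧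
    -- (b) the identity W_h ∘ m(μ_w) = (1 ⊕ m(μ_w)) ∘ W̃_h  (wavelet and scaling components)
    (∀ F : ℝ → ℂ, ∀ᵐ θ : ℝ ∂(volume : Measure ℝ),
      ((1 / 2 : ℂ) * ((starRingEnd ℂ) (hw (θ / 2)) * (μw (θ / 2) * F (θ / 2))
          + (starRingEnd ℂ) (hw (θ / 2 + π)) * (μw (θ / 2 + π) * F (θ / 2 + π)))
        = (1 / 2 : ℂ) * ((μw (θ / 2) * (starRingEnd ℂ) (hw (θ / 2))) * F (θ / 2)
          + (μw (θ / 2 + π) * (starRingEnd ℂ) (hw (θ / 2 + π))) * F (θ / 2 + π))) ∧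
      ((1 / 2 : ℂ) * ((starRingEnd ℂ) (hs (θ / 2)) * (μw (θ / 2) * F (θ / 2))
          + (starRingEnd ℂ) (hs (θ / 2 + π)) * (μw (θ / 2 + π) * F (θ / 2 + π)))
        = μw θ * ((1 / 2 : ℂ) * ((μs (θ / 2) * (starRingEnd ℂ) (hs (θ / 2))) * F (θ / 2)
          + (μs (θ / 2 + π) * (starRingEnd ℂ) (hs (θ / 2 + π))) * F (θ / 2 + π))))) ∧
    -- (c) the norm bound ‖W_g − W̃_h‖ ≤ ε
    (∀ F : ℝ → ℂ, Measurable F → Function.Periodic F (2 * π) →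
      IntervalIntegrable (fun θ : ℝ => ‖F θ‖ ^ 2) (volume : Measure ℝ) 0 (2 * π) →
      (∫ θ in (0 : ℝ)..(2 * π),
        (‖(1 / 2 : ℂ) * (((starRingEnd ℂ) (gw (θ / 2)) - μw (θ / 2) * (starRingEnd ℂ) (hw (θ / 2))) * F (θ / 2)
            + ((starRingEnd ℂ) (gw (θ / 2 + π)) - μw (θ / 2 + π) * (starRingEnd ℂ) (hw (θ / 2 + π))) * F (θ / 2 + π))‖ ^ 2
          + ‖(1 / 2 : ℂ) * (((starRingEnd ℂ) (gs (θ / 2)) - μs (θ / 2) * (starRingEnd ℂ) (hs (θ / 2))) * F (θ / 2)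
            + ((starRingEnd ℂ) (gs (θ / 2 + π)) - μs (θ / 2 + π) * (starRingEnd ℂ) (hs (θ / 2 + π))) * F (θ / 2 + π))‖ ^ 2))
        ≤ ε ^ 2 * ∫ θ in (0 : ℝ)..(2 * π), ‖F θ‖ ^ 2) := by
  have hμ : IsHilbertPhasePair μs μw := ⟨hμsper, hμwper, hμs, hμw⟩
  refine ⟨?_, fun F => ?_, fun F _ _ hF => ?_⟩
  · filter_upwards [ae_sin_ne_zero] with θ hθ
    rw [hμ.norm_wavelet_defect hmirror_g hmirror_h hθ]
    exact hHilb _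
  · filter_upwards [ae_sin_ne_zero] with θ hθ
    refine ⟨by ring, ?_⟩
    rw [← hμ.w_mul_s_half hθ, ← hμ.w_mul_s_half_add_pi hθ]
    ring
  · refine (intervalIntegral.integral_le_of_ae_le_comp_half_add pi_pos.le
      (fun θ => by positivity) hF (c := ε ^ 2 / 2) ?_).trans_eq (by ring)
    filter_upwards [ae_sin_ne_zero] with θ hθ
    rw [hμ.norm_sq_polyphase_error hgsper hhsper hmirror_g hmirror_h
      (Real.sin_half_ne_zero_of_sin_ne_zero hθ)]
    calc _ ≤ (ε ^ 2 + ε ^ 2) * (‖F (θ / 2)‖ ^ 2 + ‖F (θ / 2 + π)‖ ^ 2) / 4 := by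
          gcongr <;> exact hHilb _
      _ = _ := by ring

/-- Single-layer filter-error lemma for an ε-approximate Hilbert pair, expressed on the
Fourier side.  With quadrature-mirror filters `gs, gw` and `hs, hw` (the wavelet filters
given by the conjugate mirror relation), phases `μs(θ) = e^{−iθ/2}`,
`μw(θ) = −i sgn(θ)e^{iθ/2}`, and `‖ĥ_s − μ_s ĝ_s‖_∞ ≤ ε`, one has:
(a) the implied wavelet-filter bound `‖ĥ_w − μ_w ĝ_w‖_∞ ≤ ε` (a.e.);
(b) the operator identity `W_h ∘ m(μ_w) = (1 ⊕ m(μ_w)) ∘ W̃_h`, componentwise a.e. on the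
Fourier side, where `W̃_h = (↓ m(μ_w conj ĥ_w)) ⊕ (↓ m(μ_s conj ĥ_s))` and
`(↓f)^(θ) = ½(f̂(θ/2) + f̂(θ/2+π))`;
(c) the norm bound `‖W_g − W̃_h‖ ≤ ε`, i.e. `‖(W_g − W̃_h)f‖² ≤ ε²‖f‖²` for every `f ∈ ℓ²(ℤ)`,
written via Plancherel as an integral inequality over one period. -/
theorem approximate_hilbert_pair_one_layer
    (ε : ℝ) (hε : 0 ≤ ε)
    (gs gw hs hw μs μw : ℝ → ℂ)
    (hgsper : Function.Periodic gs (2 * π)) (hhsper : Function.Periodic hs (2 * π))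
    (hμsper : Function.Periodic μs (2 * π)) (hμwper : Function.Periodic μw (2 * π))
    (hμs : ∀ θ : ℝ, |θ| < π → μs θ = Complex.exp (-(Complex.I * θ / 2)))
    (hμw : ∀ θ : ℝ, |θ| < π →
      μw θ = -Complex.I * (Real.sign θ : ℝ) * Complex.exp (Complex.I * θ / 2))
    (hQMFg : ∀ θ : ℝ, ‖gs θ‖ ^ 2 + ‖gs (θ + π)‖ ^ 2 = 2)
    (hQMFh : ∀ θ : ℝ, ‖hs θ‖ ^ 2 + ‖hs (θ + π)‖ ^ 2 = 2)
    (hmirror_g : ∀ θ : ℝ, gw θ = Complex.exp (-(Complex.I * θ)) * (starRingEnd ℂ) (gs (θ + π)))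
    (hmirror_h : ∀ θ : ℝ, hw θ = Complex.exp (-(Complex.I * θ)) * (starRingEnd ℂ) (hs (θ + π)))
    (hHilb : ∀ θ : ℝ, ‖hs θ - μs θ * gs θ‖ ≤ ε) :
    -- (a) implied wavelet-filter bound
    (∀ᵐ θ : ℝ ∂(volume : Measure ℝ), ‖hw θ - μw θ * gw θ‖ ≤ ε) ∧
    -- (b) the identity W_h ∘ m(μ_w) = (1 ⊕ m(μ_w)) ∘ W̃_h  (wavelet and scaling components)
    (∀ F : ℝ → ℂ, ∀ᵐ θ : ℝ ∂(volume : Measure ℝ),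
      ((1 / 2 : ℂ) * ((starRingEnd ℂ) (hw (θ / 2)) * (μw (θ / 2) * F (θ / 2))
          + (starRingEnd ℂ) (hw (θ / 2 + π)) * (μw (θ / 2 + π) * F (θ / 2 + π)))
        = (1 / 2 : ℂ) * ((μw (θ / 2) * (starRingEnd ℂ) (hw (θ / 2))) * F (θ / 2)
          + (μw (θ / 2 + π) * (starRingEnd ℂ) (hw (θ / 2 + π))) * F (θ / 2 + π))) ∧
      ((1 / 2 : ℂ) * ((starRingEnd ℂ) (hs (θ / 2)) * (μw (θ / 2) * F (θ / 2))
          + (starRingEnd ℂ) (hs (θ / 2 + π)) * (μw (θ / 2 + π) * F (θ / 2 + π)))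
        = μw θ * ((1 / 2 : ℂ) * ((μs (θ / 2) * (starRingEnd ℂ) (hs (θ / 2))) * F (θ / 2)
          + (μs (θ / 2 + π) * (starRingEnd ℂ) (hs (θ / 2 + π))) * F (θ / 2 + π))))) ∧
    -- (c) the norm bound ‖W_g − W̃_h‖ ≤ ε
    (∀ F : ℝ → ℂ, Measurable F → Function.Periodic F (2 * π) →
      IntervalIntegrable (fun θ : ℝ => ‖F θ‖ ^ 2) (volume : Measure ℝ) 0 (2 * π) →
      (∫ θ in (0 : ℝ)..(2 * π),
        (‖(1 / 2 : ℂ) * (((starRingEnd ℂ) (gw (θ / 2)) - μw (θ / 2) * (starRingEnd ℂ) (hw (θ / 2))) * F (θ / 2)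
            + ((starRingEnd ℂ) (gw (θ / 2 + π)) - μw (θ / 2 + π) * (starRingEnd ℂ) (hw (θ / 2 + π))) * F (θ / 2 + π))‖ ^ 2
          + ‖(1 / 2 : ℂ) * (((starRingEnd ℂ) (gs (θ / 2)) - μs (θ / 2) * (starRingEnd ℂ) (hs (θ / 2))) * F (θ / 2)
            + ((starRingEnd ℂ) (gs (θ / 2 + π)) - μs (θ / 2 + π) * (starRingEnd ℂ) (hs (θ / 2 + π))) * F (θ / 2 + π))‖ ^ 2))
        ≤ ε ^ 2 * ∫ θ in (0 : ℝ)..(2 * π), ‖F θ‖ ^ 2) :=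
  approximate_hilbert_pair_one_layer_general ε gs gw hs hw μs μw hgsper hhsper hμsper hμwper hμs hμw
    hmirror_g hmirror_h hHilb
end
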